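/- Cumulative tracking gap bound: suppose sequences (v[t])_{t=1}^T and (v⋆[t])_{t=1}^T in ℝ^N satisfy ‖v[t+1] − v⋆[t]‖₂ ≤ ρ‖v[t] − v⋆[t]‖₂ for all 1 ≤ t ≤ T−1, where 0 ≤ ρ < 1. Define the path length W[T] = Σ_{t=2}^{T} ‖v⋆[t] − v⋆[t−1]‖₂. Then Σ_{t=1}^{T} ‖v[t] − v⋆[t]‖₂ ≤ (1/(1−ρ)) (‖v[1] − v⋆[1]‖₂ + W[T]). -/
import Mathlib


theorem cumulative_tracking_gap_bound (N T : ℕ) (hT : 1 ≤ T) (ρ : ℝ) (hρ0 : 0 ≤ ρ) (hρ1 : ρ < 1)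
    (v vs : ℕ → EuclideanSpace ℝ (Fin N))
    (hcontr : ∀ t, 1 ≤ t → t ≤ T - 1 → ‖v (t + 1) - vs t‖ ≤ ρ * ‖v t - vs t‖) :
    ∑ t ∈ Finset.Icc 1 T, ‖v t - vs t‖ ≤
      (1 / (1 - ρ)) * (‖v 1 - vs 1‖ + ∑ t ∈ Finset.Icc 2 T, ‖vs t - vs (t - 1)‖) := by
  set a : ℕ → ℝ := fun t => ‖v t - vs t‖ with ha
  set S : ℝ := ∑ t ∈ Finset.Icc 1 T, a t with hS
  set W : ℝ := ∑ t ∈ Finset.Icc 2 T, ‖vs t - vs (t - 1)‖ with hW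
  have key : ∀ t ∈ Finset.Icc 2 T, a t ≤ ρ * a (t - 1) + ‖vs t - vs (t - 1)‖ := by
    intro t ht
    simp only [Finset.mem_Icc] at ht
    obtain ⟨h2, hT'⟩ := ht
    have hc := hcontr (t - 1) (by omega) (by omega)
    rw [show t - 1 + 1 = t by omega] at hc
    have htri : ‖v t - vs t‖ ≤ ‖v t - vs (t - 1)‖ + ‖vs (t - 1) - vs t‖ :=
      norm_sub_le_norm_sub_add_norm_sub _ _ _
    rw [norm_sub_rev (vs (t-1))] at htri
    simp only [ha]
    linarith
  have hsplit : S = a 1 + ∑ t ∈ Finset.Icc 2 T, a t := by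
    rw [hS, show Finset.Icc 1 T = insert 1 (Finset.Icc 2 T) by ext x; simp [Finset.mem_Icc]; omega,
      Finset.sum_insert (by simp)]
  have hshift : ∑ t ∈ Finset.Icc 2 T, a (t - 1) = ∑ t ∈ Finset.Icc 1 (T - 1), a t := by
    rw [show Finset.Icc 2 T = Finset.Icc (1+1) ((T-1)+1) by congr 1; omega,
      ← Finset.map_add_right_Icc, Finset.sum_map]
    simp
  have hle : ∑ t ∈ Finset.Icc 1 (T - 1), a t ≤ S := by
    apply Finset.sum_le_sum_of_subset_of_nonneg
    · intro x; simp only [Finset.mem_Icc]; omega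
    · intro i _ _; exact norm_nonneg _
  have hsum2 : ∑ t ∈ Finset.Icc 2 T, a t ≤ ρ * S + W := by
    calc ∑ t ∈ Finset.Icc 2 T, a t
        ≤ ∑ t ∈ Finset.Icc 2 T, (ρ * a (t - 1) + ‖vs t - vs (t - 1)‖) :=
          Finset.sum_le_sum key
      _ = ρ * (∑ t ∈ Finset.Icc 2 T, a (t - 1)) + W := by
          rw [Finset.sum_add_distrib, ← Finset.mul_sum]
      _ ≤ ρ * S + W := by
          rw [hshift]
          have := mul_le_mul_of_nonneg_left hle hρ0
          linarith
  have hmain : (1 - ρ) * S ≤ a 1 + W := by linarith [hsplit, hsum2]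
  rw [one_div, ← div_eq_inv_mul, le_div_iff₀ (by linarith)]
  linarith
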